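/- Let G be a nontrivial finite group and P a finite free G-poset. Then every chain in P has length at most the number of colors in any proper coloring of C_P minus |G| plus 1; more precisely, if c : C_P → {1,…,C} is a proper coloring, then the order complex Δ(P) admits a simplicial G-equivariant map into Δ(G × {1,…,C−|G|+1}), a free (C−|G|)-dimensional simplicial G-complex. -/

import Mathlib

/-- The compatibility graph of a `G`-poset `P` (action preserving the strict order):
vertices are elements of `P`, and `x ~ y` iff `x ≠ y` and there is `g ≠ 1` with
`x` and `g • y` comparable. -/
def compatGraph (G : Type*) {P : Type*} [Group G] [PartialOrder P] [MulAction G P]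
    (hm : ∀ g : G, ∀ x y : P, x < y → g • x < g • y) : SimpleGraph P where
  Adj x y := x ≠ y ∧ ∃ g : G, g ≠ 1 ∧ (x ≤ g • y ∨ g • y ≤ x)
  symm := by
    have hmono : ∀ (g : G), Monotone (fun z : P => g • z) := by
      intro g a b hab
      rcases eq_or_lt_of_le hab with h | h
      · simp [h]
      · exact (hm g a b h).le
    constructor
    rintro x y ⟨hxy, g, hg, h⟩
    refine ⟨hxy.symm, g⁻¹, by simpa using hg, ?_⟩
    rcases h with h | h
    · right
      have := hmono g⁻¹ h
      simpa using this
    · left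
      have := hmono g⁻¹ h
      simpa using this
  loopless := ⟨fun x h => h.1 rfl⟩

open scoped BigOperators

/-- Geometric realization of the order complex of a finite poset `Q`, realized as the
set of convex-combination weight functions supported on chains of `Q`. -/
def ordCpxReal (Q : Type*) [PartialOrder Q] [Fintype Q] : Set (Q → ℝ) :=
  {f | (∀ x, 0 ≤ f x) ∧ (∑ x, f x) = 1 ∧
    ∀ x y, f x ≠ 0 → f y ≠ 0 → (x ≤ y ∨ y ≤ x)}

/-- The `G`-poset `G × {1, …, n+1}` whose order complex is a model for `E_n G`. -/
def EPoset (G : Type*) (n : ℕ) : Type _ := G × Fin (n + 1)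

/-- The order `(h, x) < (g, y)` iff `x < y`. -/
instance EPoset.instPartialOrder (G : Type*) (n : ℕ) : PartialOrder (EPoset G n) where
  le a b := a = b ∨ a.2 < b.2
  le_refl a := Or.inl rfl
  le_trans a b c h h' := by
    rcases h with rfl | h
    · exact h'
    · rcases h' with rfl | h'
      · exact Or.inr h
      · exact Or.inr (h.trans h')
  le_antisymm a b h h' := by
    rcases h with rfl | h
    · rfl
    · rcases h' with rfl | h'
      · rfl
      · exact absurd h' (lt_asymm h)

/-- The action `h • (g, i) = (h * g, i)` of `G` on `G × {1, …, n+1}`. -/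
instance EPoset.instFintype (G : Type*) [Fintype G] (n : ℕ) : Fintype (EPoset G n) :=
  instFintypeProd G (Fin (n + 1))

instance EPoset.instSMul (G : Type*) [Group G] (n : ℕ) : SMul G (EPoset G n) :=
  ⟨fun h a => (h * a.1, a.2)⟩

/-- The action of `g ∈ G` on weight functions: `(g • f) q = f (g⁻¹ • q)`. -/
def shiftFun {G Q : Type*} [Group G] [SMul G Q] (g : G) (f : Q → ℝ) : Q → ℝ :=
  fun q => f (g⁻¹ • q)

/-- There is a continuous `G`-equivariant map from the realization of the order complex
of `P` to the realization of the order complex of `G × {1, …, n+1}` (an `E_n G`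
space); this witnesses `ind_G |Δ(P)| ≤ n`. -/
def IndLE (G P : Type*) [Group G] [PartialOrder P] [MulAction G P] [Fintype P]
    [Fintype G] (n : ℕ) : Prop :=
  ∃ F : C(↥(ordCpxReal P), ↥(ordCpxReal (EPoset G n))),
    ∀ (g : G) (f f' : ↥(ordCpxReal P)), (f' : P → ℝ) = shiftFun g (f : P → ℝ) →
      (F f' : EPoset G n → ℝ) = shiftFun g (F f : EPoset G n → ℝ)

/-- The `G`-index of the realization of the order complex of `P`:
the least `n` for which there is a `G`-equivariant map into an `E_n G` space. -/
noncomputable def indG (G P : Type*) [Group G] [PartialOrder P] [MulAction G P]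
    [Fintype P] [Fintype G] : ℕ∞ :=
  sInf ((fun n : ℕ => (n : ℕ∞)) '' {n | IndLE G P n})

/-- A space is `k`-connected if it is nonempty and for every `0 ≤ m ≤ k` every
continuous map `S^m → X` extends to a continuous map `B^{m+1} → X`. -/
def KConnected (X : Type*) [TopologicalSpace X] (k : ℕ) : Prop :=
  Nonempty X ∧ ∀ m : ℕ, m ≤ k →
    ∀ f : C((Metric.sphere (0 : EuclideanSpace ℝ (Fin (m + 1))) 1 : Set _), X),
      ∃ F : C((Metric.closedBall (0 : EuclideanSpace ℝ (Fin (m + 1))) 1 : Set _), X),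
        ∀ (x : EuclideanSpace ℝ (Fin (m + 1)))
          (hx : x ∈ Metric.sphere (0 : EuclideanSpace ℝ (Fin (m + 1))) 1),
          F ⟨x, Metric.sphere_subset_closedBall hx⟩ = f ⟨x, hx⟩

/-!
Every orbit `G • x` is a clique of `C_P` (freeness makes its points distinct), so its `|G|`
points carry distinct colors and the least of them is at most `C - |G|`. Label `x` by that
least color `i` together with the inverse of the unique `g` with `c (g • x) = i`; this is
`G`-equivariant. Along a chain `x < y` the labels are comparable unless both orbits have the
same least color `i`, attained at `g • x` and `g' • y`; these are adjacent in `C_P` unless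
`g = g'`, because no orbit meets a chain twice.
-/

open Finset

theorem not_lt_smul_self_of_isOfFinOrder {M P : Type*} [Monoid M] [Preorder P]
    [MulAction M P] {k : M} (hk : IsOfFinOrder k) (hmono : StrictMono (k • · : P → P))
    (x : P) : ¬ x < k • x := by
  intro hlt
  obtain ⟨n, hn, hkn⟩ := hk.exists_pow_eq_one
  have : (k • ·)^[0] x < (k • ·)^[n] x := hmono.strictMono_iterate_of_lt_map hlt hn
  rw [Function.iterate_zero_apply, smul_iterate_apply, hkn, one_smul] at this
  exact lt_irrefl x this

theorem EPoset.le_or_le_of_snd_eq_imp_eq {G : Type*} {n : ℕ} {a b : EPoset G n}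
    (h : a.2 = b.2 → a = b) : a ≤ b ∨ b ≤ a := by
  rcases lt_trichotomy a.2 b.2 with hlt | heq | hgt
  · exact Or.inl (Or.inr hlt)
  · exact Or.inl (Or.inl (h heq))
  · exact Or.inr (Or.inr hgt)

theorem EPoset.smul_eq_mk {G : Type*} [Group G] {n : ℕ} (g : G) (a : EPoset G n) :
    g • a = (g * a.1, a.2) :=
  rfl

section CompatGraph

variable {G P : Type*} [Group G] [PartialOrder P] [MulAction G P]
  {hm : ∀ g : G, ∀ x y : P, x < y → g • x < g • y}

theorem compatGraph_adj_smul_smul {x y : P} (hxy : x ≤ y) {g g' : G} (hg : g ≠ g')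
    (hne : g • x ≠ g' • y) : (compatGraph G hm).Adj (g • x) (g' • y) := by
  refine ⟨hne, g * g'⁻¹, mul_inv_eq_one.not.mpr hg, Or.inl ?_⟩
  rw [smul_smul, inv_mul_cancel_right]
  rcases hxy.eq_or_lt with rfl | hlt
  · exact le_rfl
  · exact (hm g x y hlt).le

variable {α : Type*} (c : (compatGraph G hm).Coloring α)

theorem eq_or_smul_eq_of_coloring_eq {x y : P} (hxy : x ≤ y) {g g' : G}
    (h : c (g • x) = c (g' • y)) : g = g' ∨ g • x = g' • y := by
  by_contra! hne
  exact c.valid (compatGraph_adj_smul_smul hxy hne.1 hne.2) h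

theorem coloring_smul_injective (hfree : ∀ (g : G) (x : P), g • x = x → g = 1) (x : P) :
    Function.Injective fun g : G => c (g • x) := by
  intro g g' h
  refine (eq_or_smul_eq_of_coloring_eq c le_rfl h).elim id fun heq => ?_
  exact (inv_mul_eq_one.mp (hfree _ x (by rw [mul_smul, heq, inv_smul_smul]))).symm

variable [Fintype G] [LinearOrder α]

noncomputable def orbitMinColor (x : P) : α :=
  univ.inf' univ_nonempty fun g : G => c (g • x)

noncomputable def orbitMinColorElt (x : P) : G :=
  (exists_mem_eq_inf' univ_nonempty fun g : G => c (g • x)).choose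

theorem color_orbitMinColorElt_smul (x : P) :
    c (orbitMinColorElt c x • x) = orbitMinColor c x :=
  (exists_mem_eq_inf' univ_nonempty fun g : G => c (g • x)).choose_spec.2.symm

theorem orbitMinColor_le_color_smul (g : G) (x : P) : orbitMinColor c x ≤ c (g • x) :=
  inf'_le _ (mem_univ g)

theorem orbitMinColor_smul (h : G) (x : P) : orbitMinColor c (h • x) = orbitMinColor c x :=
  le_antisymm
    (le_inf' _ _ fun g _ => by
      simpa [smul_smul] using orbitMinColor_le_color_smul c (g * h⁻¹) (h • x))
    (le_inf' _ _ fun g _ => by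
      simpa [smul_smul] using orbitMinColor_le_color_smul c (g * h) x)

theorem eq_orbitMinColorElt_of_color_eq (hfree : ∀ (g : G) (x : P), g • x = x → g = 1)
    {g : G} {x : P} (h : c (g • x) = orbitMinColor c x) : g = orbitMinColorElt c x :=
  coloring_smul_injective c hfree x (h.trans (color_orbitMinColorElt_smul c x).symm)

theorem orbitMinColorElt_smul (hfree : ∀ (g : G) (x : P), g • x = x → g = 1) (h : G)
    (x : P) : orbitMinColorElt c (h • x) = orbitMinColorElt c x * h⁻¹ := by
  refine (eq_orbitMinColorElt_of_color_eq c hfree ?_).symm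
  rw [smul_smul, inv_mul_cancel_right, color_orbitMinColorElt_smul, orbitMinColor_smul]

theorem orbitMinColorElt_eq_of_le_of_orbitMinColor_eq {x y : P} (hxy : x ≤ y)
    (h : orbitMinColor c x = orbitMinColor c y) :
    orbitMinColorElt c x = orbitMinColorElt c y := by
  rcases hxy.eq_or_lt with rfl | hlt
  · rfl
  refine (eq_or_smul_eq_of_coloring_eq c hxy ?_).resolve_right fun heq => ?_
  · rw [color_orbitMinColorElt_smul, color_orbitMinColorElt_smul, h]
  · refine not_lt_smul_self_of_isOfFinOrder (isOfFinOrder_of_finite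
      ((orbitMinColorElt c y)⁻¹ * orbitMinColorElt c x)) (fun a b => hm _ a b) x ?_
    rwa [mul_smul, heq, inv_smul_smul]

theorem orbitMinColor_add_card_le {C : ℕ} (c : (compatGraph G hm).Coloring (Fin C))
    (hfree : ∀ (g : G) (x : P), g • x = x → g = 1) (x : P) :
    (orbitMinColor c x).val + Fintype.card G ≤ C := by
  have hsub : univ.image (fun g : G => c (g • x)) ⊆ Ici (orbitMinColor c x) := by
    intro i hi
    obtain ⟨g, -, rfl⟩ := mem_image.mp hi
    exact mem_Ici.mpr (orbitMinColor_le_color_smul c g x)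
  have := card_le_card hsub
  rw [card_image_of_injective _ (coloring_smul_injective c hfree x), card_univ,
    Fin.card_Ici] at this
  have := (orbitMinColor c x).is_lt
  omega

noncomputable def orbitLabel {C : ℕ} (c : (compatGraph G hm).Coloring (Fin C))
    (hfree : ∀ (g : G) (x : P), g • x = x → g = 1) (x : P) : EPoset G (C - Fintype.card G) :=
  ((orbitMinColorElt c x)⁻¹,
    ⟨(orbitMinColor c x).val, by have := orbitMinColor_add_card_le c hfree x; omega⟩)

theorem orbitLabel_smul {C : ℕ} (c : (compatGraph G hm).Coloring (Fin C))
    (hfree : ∀ (g : G) (x : P), g • x = x → g = 1) (g : G) (x : P) :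
    orbitLabel c hfree (g • x) = g • orbitLabel c hfree x := by
  rw [EPoset.smul_eq_mk]
  simp only [orbitLabel, orbitMinColorElt_smul c hfree, orbitMinColor_smul, mul_inv_rev, inv_inv]
  rfl

theorem orbitLabel_le_or_le {C : ℕ} (c : (compatGraph G hm).Coloring (Fin C))
    (hfree : ∀ (g : G) (x : P), g • x = x → g = 1) {x y : P} (hxy : x ≤ y) :
    orbitLabel c hfree x ≤ orbitLabel c hfree y ∨
      orbitLabel c hfree y ≤ orbitLabel c hfree x :=
  EPoset.le_or_le_of_snd_eq_imp_eq fun h => by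
    have hcol : orbitMinColor c x = orbitMinColor c y := Fin.ext (Fin.mk.inj_iff.mp h)
    exact Prod.ext
      (by simp [orbitLabel, orbitMinColorElt_eq_of_le_of_orbitMinColor_eq c hxy hcol]) h

end CompatGraph

theorem exists_equivariant_simplicial_map_general
    (G P : Type*) [Group G] [Fintype G] [PartialOrder P]
    [MulAction G P]
    (hm : ∀ g : G, ∀ x y : P, x < y → g • x < g • y)
    (hfree : ∀ (g : G) (x : P), g • x = x → g = 1)
    (C : ℕ) (c : (compatGraph G hm).Coloring (Fin C)) :
    ∃ l : P → EPoset G (C - Fintype.card G),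
      (∀ (g : G) (x : P), l (g • x) = g • l x) ∧
      (∀ x y : P, x ≤ y → (l x ≤ l y ∨ l y ≤ l x)) :=
  ⟨orbitLabel c hfree, orbitLabel_smul c hfree, fun _ _ => orbitLabel_le_or_le c hfree⟩

/-- Let `G` be a nontrivial finite group, `P` a finite free `G`-poset,
and `c` a proper coloring of `C_P` with `C` colors.  Then the order complex `Δ(P)`
admits a simplicial `G`-equivariant map into `Δ(G × {1, …, C - |G| + 1})`: there is a
`G`-equivariant vertex map `l : P → G × Fin (C - |G| + 1)` taking every chain of `P`
to a chain (hence every simplex to a simplex). -/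
theorem exists_equivariant_simplicial_map
    (G P : Type*) [Group G] [Fintype G] [Nontrivial G] [PartialOrder P] [Fintype P]
    [MulAction G P]
    (hm : ∀ g : G, ∀ x y : P, x < y → g • x < g • y)
    (hfree : ∀ (g : G) (x : P), g • x = x → g = 1)
    (C : ℕ) (c : (compatGraph G hm).Coloring (Fin C)) :
    ∃ l : P → EPoset G (C - Fintype.card G),
      (∀ (g : G) (x : P), l (g • x) = g • l x) ∧
      (∀ x y : P, x ≤ y → (l x ≤ l y ∨ l y ≤ l x)) :=
  exists_equivariant_simplicial_map_general G P hm hfree C c
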